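/- Let K and C be convex bodies in E^d, let r > 0 be the C-inradius of K (the largest λ such that some translate of λ·C is contained in K), and let n ≥ 1 be an integer. For 0 < ρ ≤ r, let K^{ρC} denote the ρC-rounded body of K, i.e., the union of all translates of ρ·C that are contained in K, and for a compact convex set Q with nonempty interior let w_C(Q) = inf_u ( width of Q in direction u / width of C in direction u ), the infimum over unit vectors u, be the minimal C-width of Q. Then there exists a uniquely determined ρ ∈ (0, r] such that w_C(K^{ρC}) = n·ρ (the n-th successive C-inradius of K). -/

import Mathlib

/-!
Write `F ρ = w_C(K^{ρC})`. Translating `C` changes neither `K^{ρC}` nor `w_C`, so we may assume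
`0 ∈ int C`. Then `K^{ρC} = (K ⊖ ρC) + ρC`, and `a • K^{ρ₁C} + b • K^{ρ₂C} ⊆ K^{(aρ₁ + bρ₂)C}`
for convex weights, so `F` is concave and nonincreasing on `[0, r]`; it is at least `r` there,
because `K^{ρC}` contains a translate of `rC`. Maximality of `r` forces `K ⊖ rC` to have empty
interior, hence to lie in a hyperplane with unit normal `u`, and
`F ρ ≤ ρ + width_u (K ⊖ ρC) / width_u C`, where the last quotient tends to `0` as `ρ → r⁻`.
So `F ρ - n ρ` is strictly decreasing, continuous on `(0, r)` by concavity, positive near `0`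
and, for `n ≥ 2`, negative near `r`; for `n = 1` the root is `r` itself.
-/

open scoped RealInnerProductSpace

/-- The width of a set `Q` in direction `u`. -/
noncomputable def dirWidth {d : ℕ} (Q : Set (EuclideanSpace ℝ (Fin d)))
    (u : EuclideanSpace ℝ (Fin d)) : ℝ :=
  sSup ((fun x => ⟪x, u⟫) '' Q) - sInf ((fun x => ⟪x, u⟫) '' Q)

/-- The minimal `C`-width of `Q`: the infimum over unit directions `u` of the ratio of
the width of `Q` in direction `u` to the width of `C` in direction `u`. -/
noncomputable def relMinWidth {d : ℕ} (C Q : Set (EuclideanSpace ℝ (Fin d))) : ℝ :=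
  ⨅ u : {v : EuclideanSpace ℝ (Fin d) // ‖v‖ = 1}, dirWidth Q u / dirWidth C u

/-- The `ρC`-rounded body of `K`: the union of all translates of `ρ • C` contained
in `K`. -/
def roundedBody {d : ℕ} (K C : Set (EuclideanSpace ℝ (Fin d))) (ρ : ℝ) :
    Set (EuclideanSpace ℝ (Fin d)) :=
  ⋃ t ∈ {t : EuclideanSpace ℝ (Fin d) | (fun x => t + ρ • x) '' C ⊆ K},
    (fun x => t + ρ • x) '' C

open Set Topology Pointwise

lemma Convex.exists_subset_hyperplane_of_interior_eq_empty {E : Type*}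
    [NormedAddCommGroup E] [InnerProductSpace ℝ E] [FiniteDimensional ℝ E] {s : Set E}
    (hs : Convex ℝ s) (hint : interior s = ∅) (hne : s.Nonempty) :
    ∃ u : E, ‖u‖ = 1 ∧ ∃ α : ℝ, s ⊆ {x | ⟪x, u⟫ = α} := by
  obtain ⟨x₀, hx₀⟩ := hne
  have hspan : affineSpan ℝ s ≠ ⊤ := fun h => by
    simpa [hint] using hs.interior_nonempty_iff_affineSpan_eq_top.2 h
  have hdir : (affineSpan ℝ s).direction ≠ ⊤ := fun h =>
    hspan ((AffineSubspace.direction_eq_top_iff_of_nonempty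
      ⟨x₀, subset_affineSpan ℝ s hx₀⟩).1 h)
  obtain ⟨u, hu, hu0⟩ := (Submodule.ne_bot_iff _).1 (mt Submodule.orthogonal_eq_bot_iff.1 hdir)
  refine ⟨‖u‖⁻¹ • u, norm_smul_inv_norm hu0, ⟪x₀, ‖u‖⁻¹ • u⟫, fun x hx => ?_⟩
  have horth : ⟪x - x₀, u⟫ = 0 := Submodule.inner_right_of_mem_orthogonal
    (AffineSubspace.vsub_mem_direction (subset_affineSpan ℝ s hx)
      (subset_affineSpan ℝ s hx₀)) hu
  rw [inner_sub_left, sub_eq_zero] at horth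
  simp only [mem_ofPred_eq, real_inner_smul_right, horth]

theorem existsUnique_eq_nat_mul_of_concaveOn {F : ℝ → ℝ} {r : ℝ} {n : ℕ} (hn : 1 ≤ n)
    (hr : 0 < r) (hconc : ConcaveOn ℝ (Icc 0 r) F) (hanti : AntitoneOn F (Icc 0 r))
    (hge : ∀ ρ ∈ Icc 0 r, r ≤ F ρ) (hlim : ∀ s > 0, ∀ᶠ ρ in 𝓝[<] r, F ρ ≤ ρ + s) :
    ∃! ρ, (0 < ρ ∧ ρ ≤ r) ∧ F ρ = n * ρ := by
  have hn₀ : (0 : ℝ) < n := by exact_mod_cast hn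
  have hrr : r ∈ Icc 0 r := right_mem_Icc.2 hr.le
  have hFr : F r = r := by
    refine le_antisymm (le_of_forall_pos_lt_add fun s hs => ?_) (hge r hrr)
    obtain ⟨ρ, hρs, hρ⟩ := ((hlim s hs).and (Ioo_mem_nhdsLT hr)).exists
    linarith [hanti ⟨hρ.1.le, hρ.2.le⟩ hrr hρ.2.le]
  have hstrict : StrictAntiOn (fun ρ => F ρ - n * ρ) (Icc 0 r) := fun a ha b hb hab => by
    have := hanti ha hb hab.le
    simp only
    nlinarith
  refine existsUnique_of_exists_of_unique ?_ fun ρ ρ' h h' =>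
    hstrict.injOn ⟨h.1.1.le, h.1.2⟩ ⟨h'.1.1.le, h'.1.2⟩ (by simp only [h.2, h'.2, sub_self])
  rcases hn.eq_or_lt with rfl | hn₂
  · exact ⟨r, ⟨hr, le_rfl⟩, by simp [hFr]⟩
  have hn₂' : (1 : ℝ) < n := by exact_mod_cast hn₂
  -- `F ρ - n ρ` is `≥ 0` at `ρ₀ = r / (2n)`, `≤ 0` at some `ρ₁ ∈ (r / 2, r)`, and continuous
  -- in between by concavity.
  obtain ⟨ρ₁, hρ₁F, hρ₁⟩ := ((hlim ((n - 1) * r / 2) (by nlinarith)).and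
    (Ioo_mem_nhdsLT (half_lt_self hr))).exists
  set ρ₀ := r / (2 * n) with hρ₀_def
  have hρ₀ : 0 < ρ₀ := by positivity
  have hnρ₀ : n * ρ₀ = r / 2 := by rw [hρ₀_def]; field_simp
  have hρ₀₁ : ρ₀ ≤ ρ₁ := by
    have : ρ₀ ≤ r / 2 := by rw [div_le_div_iff_of_pos_left hr (by positivity) two_pos]; linarith
    linarith [hρ₁.1]
  have hcont : ContinuousOn (fun ρ => F ρ - n * ρ) (Icc ρ₀ ρ₁) :=
    ((interior_Icc (a := (0 : ℝ)) (b := r) ▸ hconc.continuousOn_interior).mono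
      fun ρ (hρ : ρ ∈ Icc ρ₀ ρ₁) => ⟨hρ₀.trans_le hρ.1, hρ.2.trans_lt hρ₁.2⟩).sub
      (continuousOn_const.mul continuousOn_id)
  obtain ⟨ρ, hρ, hρ0⟩ := intermediate_value_Icc' hρ₀₁ hcont (show (0 : ℝ) ∈ Icc _ _ from
    ⟨by nlinarith [hρ₁.1], by linarith [hge ρ₀ ⟨hρ₀.le, by linarith [hρ₁.2]⟩]⟩)
  exact ⟨ρ, ⟨hρ₀.trans_le hρ.1, hρ.2.trans hρ₁.2.le⟩, sub_eq_zero.1 hρ0⟩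

section dirWidth

variable {d : ℕ} {A B Q : Set (EuclideanSpace ℝ (Fin d))} {u : EuclideanSpace ℝ (Fin d)}

lemma IsCompact.image_inner (hQ : IsCompact Q) (u : EuclideanSpace ℝ (Fin d)) :
    IsCompact ((fun x => ⟪x, u⟫) '' Q) :=
  hQ.image (continuous_id.inner continuous_const)

lemma le_dirWidth (hQ : IsCompact Q) {x y : EuclideanSpace ℝ (Fin d)} (hx : x ∈ Q) (hy : y ∈ Q) :
    ⟪x, u⟫ - ⟪y, u⟫ ≤ dirWidth Q u :=
  sub_le_sub (le_csSup (hQ.image_inner u).bddAbove (mem_image_of_mem _ hx))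
    (csInf_le (hQ.image_inner u).bddBelow (mem_image_of_mem _ hy))

lemma exists_dirWidth_eq (hQ : IsCompact Q) (hne : Q.Nonempty) (u : EuclideanSpace ℝ (Fin d)) :
    ∃ x ∈ Q, ∃ y ∈ Q, dirWidth Q u = ⟪x, u⟫ - ⟪y, u⟫ := by
  obtain ⟨x, hx, hxu⟩ := (hQ.image_inner u).sSup_mem (hne.image _)
  obtain ⟨y, hy, hyu⟩ := (hQ.image_inner u).sInf_mem (hne.image _)
  exact ⟨x, hx, y, hy, by rw [dirWidth, ← hxu, ← hyu]⟩

lemma dirWidth_le (hQ : IsCompact Q) (hne : Q.Nonempty) {w : ℝ}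
    (h : ∀ x ∈ Q, ∀ y ∈ Q, ⟪x, u⟫ - ⟪y, u⟫ ≤ w) : dirWidth Q u ≤ w := by
  obtain ⟨x, hx, y, hy, hw⟩ := exists_dirWidth_eq hQ hne u
  exact hw ▸ h x hx y hy

@[simp]
lemma dirWidth_empty : dirWidth (∅ : Set (EuclideanSpace ℝ (Fin d))) u = 0 := by
  simp [dirWidth]

lemma dirWidth_nonneg (hQ : IsCompact Q) : 0 ≤ dirWidth Q u := by
  rcases Q.eq_empty_or_nonempty with rfl | ⟨x, hx⟩
  · rw [dirWidth_empty]
  · simpa using le_dirWidth (u := u) hQ hx hx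

lemma dirWidth_mono (hA : IsCompact A) (hB : IsCompact B) (h : A ⊆ B) :
    dirWidth A u ≤ dirWidth B u := by
  rcases A.eq_empty_or_nonempty with rfl | hne
  · rw [dirWidth_empty]; exact dirWidth_nonneg hB
  · exact dirWidth_le hA hne fun x hx y hy => le_dirWidth hB (h hx) (h hy)

lemma dirWidth_add (hA : IsCompact A) (hAne : A.Nonempty) (hB : IsCompact B)
    (hBne : B.Nonempty) : dirWidth (A + B) u = dirWidth A u + dirWidth B u := by
  refine le_antisymm (dirWidth_le (hA.add hB) (hAne.add hBne) ?_) ?_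
  · rintro _ ⟨a, ha, b, hb, rfl⟩ _ ⟨a', ha', b', hb', rfl⟩
    have hwA := le_dirWidth (u := u) hA ha ha'
    have hwB := le_dirWidth (u := u) hB hb hb'
    simp only [inner_add_left]
    linarith
  · obtain ⟨a, ha, a', ha', hwA⟩ := exists_dirWidth_eq hA hAne u
    obtain ⟨b, hb, b', hb', hwB⟩ := exists_dirWidth_eq hB hBne u
    have hw := le_dirWidth (u := u) (hA.add hB) (add_mem_add ha hb) (add_mem_add ha' hb')
    simp only [inner_add_left] at hw
    linarith

lemma dirWidth_smul (hA : IsCompact A) {c : ℝ} (hc : 0 ≤ c) :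
    dirWidth (c • A) u = c * dirWidth A u := by
  rcases A.eq_empty_or_nonempty with rfl | hne
  · simp
  refine le_antisymm (dirWidth_le (hA.smul c) (hne.smul_set) ?_) ?_
  · rintro _ ⟨x, hx, rfl⟩ _ ⟨y, hy, rfl⟩
    simp only [real_inner_smul_left, ← mul_sub]
    exact mul_le_mul_of_nonneg_left (le_dirWidth hA hx hy) hc
  · obtain ⟨x, hx, y, hy, hw⟩ := exists_dirWidth_eq hA hne u
    have := le_dirWidth (u := u) (hA.smul c) (smul_mem_smul_set (a := c) hx)
      (smul_mem_smul_set (a := c) hy)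
    rwa [real_inner_smul_left, real_inner_smul_left, ← mul_sub, ← hw] at this

lemma dirWidth_vadd (hA : IsCompact A) (hAne : A.Nonempty) (t : EuclideanSpace ℝ (Fin d)) :
    dirWidth (t +ᵥ A) u = dirWidth A u := by
  rw [show t +ᵥ A = {t} + A by rw [singleton_add]; rfl,
    dirWidth_add isCompact_singleton (singleton_nonempty t) hA hAne, add_eq_right, dirWidth,
    image_singleton, csSup_singleton, csInf_singleton, sub_self]

lemma dirWidth_pos (hQ : IsCompact Q) (hint : (interior Q).Nonempty) (hu : ‖u‖ = 1) :
    0 < dirWidth Q u := by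
  obtain ⟨x, hx⟩ := hint
  obtain ⟨ε, hε, hball⟩ := Metric.isOpen_iff.1 isOpen_interior x hx
  have hmem : ∀ s : ℝ, |s| < ε → x + s • u ∈ Q := fun s hs =>
    interior_subset <| hball <| by simpa [dist_eq_norm, norm_smul, hu] using hs
  have hw := le_dirWidth (u := u) hQ (hmem (ε / 2) (by rw [abs_of_pos (by positivity)]; linarith))
    (hmem (-(ε / 2)) (by rw [abs_neg, abs_of_pos (by positivity)]; linarith))
  simp only [inner_add_left, real_inner_smul_left, real_inner_self_eq_norm_sq, hu] at hw
  linarith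

end dirWidth

section relMinWidth

variable {d : ℕ} {C Q Q' : Set (EuclideanSpace ℝ (Fin d))}

lemma bddBelow_range_dirWidth_div (hQ : IsCompact Q) (hC : IsCompact C) :
    BddBelow (range fun u : {v : EuclideanSpace ℝ (Fin d) // ‖v‖ = 1} =>
      dirWidth Q u / dirWidth C u) :=
  ⟨0, by rintro _ ⟨u, rfl⟩; exact div_nonneg (dirWidth_nonneg hQ) (dirWidth_nonneg hC)⟩

lemma relMinWidth_le (hQ : IsCompact Q) (hC : IsCompact C)
    (u : {v : EuclideanSpace ℝ (Fin d) // ‖v‖ = 1}) :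
    relMinWidth C Q ≤ dirWidth Q u / dirWidth C u :=
  ciInf_le (bddBelow_range_dirWidth_div hQ hC) u

lemma relMinWidth_mono (hQ : IsCompact Q) (hQ' : IsCompact Q') (hC : IsCompact C)
    (h : Q ⊆ Q') : relMinWidth C Q ≤ relMinWidth C Q' :=
  ciInf_mono (bddBelow_range_dirWidth_div hQ hC) fun _ =>
    div_le_div_of_nonneg_right (dirWidth_mono hQ hQ' h) (dirWidth_nonneg hC)

lemma relMinWidth_vadd_left (hC : IsCompact C) (hCne : C.Nonempty)
    (c : EuclideanSpace ℝ (Fin d)) : relMinWidth (c +ᵥ C) Q = relMinWidth C Q := by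
  simp only [relMinWidth, dirWidth_vadd hC hCne]

lemma relMinWidth_vadd_smul_self [Nonempty {v : EuclideanSpace ℝ (Fin d) // ‖v‖ = 1}]
    (hC : IsCompact C) (hCint : (interior C).Nonempty) (t : EuclideanSpace ℝ (Fin d))
    {ρ : ℝ} (hρ : 0 ≤ ρ) : relMinWidth C (t +ᵥ ρ • C) = ρ := by
  have hCne : C.Nonempty := hCint.mono interior_subset
  calc relMinWidth C (t +ᵥ ρ • C)
      = ⨅ u : {v : EuclideanSpace ℝ (Fin d) // ‖v‖ = 1}, ρ := by
        refine iInf_congr fun u => ?_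
        rw [dirWidth_vadd (hC.smul ρ) hCne.smul_set, dirWidth_smul hC hρ,
          mul_div_cancel_right₀ _ (dirWidth_pos hC hCint u.2).ne']
    _ = ρ := ciInf_const

lemma mul_relMinWidth_add_mul_le (hQ : IsCompact Q) (hQne : Q.Nonempty) (hQ' : IsCompact Q')
    (hQ'ne : Q'.Nonempty) {Q'' : Set (EuclideanSpace ℝ (Fin d))} (hQ'' : IsCompact Q'')
    (hC : IsCompact C) (hCint : (interior C).Nonempty) {a b : ℝ} (ha : 0 ≤ a) (hb : 0 ≤ b)
    (h : a • Q + b • Q' ⊆ Q'') :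
    a * relMinWidth C Q + b * relMinWidth C Q' ≤ relMinWidth C Q'' := by
  cases isEmpty_or_nonempty {v : EuclideanSpace ℝ (Fin d) // ‖v‖ = 1}
  · simp [relMinWidth, Real.iInf_of_isEmpty]
  refine le_ciInf fun u => ?_
  have hCu := dirWidth_pos hC hCint u.2
  have hsum : IsCompact (a • Q + b • Q') := (hQ.smul a).add (hQ'.smul b)
  calc a * relMinWidth C Q + b * relMinWidth C Q'
      ≤ a * (dirWidth Q u / dirWidth C u) + b * (dirWidth Q' u / dirWidth C u) := by
        gcongr <;> exact relMinWidth_le ‹_› hC u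
    _ = dirWidth (a • Q + b • Q') u / dirWidth C u := by
        rw [dirWidth_add (hQ.smul a) hQne.smul_set (hQ'.smul b) hQ'ne.smul_set,
          dirWidth_smul hQ ha, dirWidth_smul hQ' hb]
        ring
    _ ≤ dirWidth Q'' u / dirWidth C u := by
        gcongr; exact dirWidth_mono hsum hQ'' h

end relMinWidth

/-- The Minkowski difference `K ⊖ ρC`. -/
def minkowskiDiff {d : ℕ} (K C : Set (EuclideanSpace ℝ (Fin d))) (ρ : ℝ) :
    Set (EuclideanSpace ℝ (Fin d)) :=
  {t | (fun x => t + ρ • x) '' C ⊆ K}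

section minkowskiDiff

variable {d : ℕ} {K C : Set (EuclideanSpace ℝ (Fin d))} {ρ ρ' r : ℝ}
  {t : EuclideanSpace ℝ (Fin d)}

lemma mem_minkowskiDiff : t ∈ minkowskiDiff K C ρ ↔ ∀ c ∈ C, t + ρ • c ∈ K :=
  image_subset_iff

lemma minkowskiDiff_subset (h0 : (0 : EuclideanSpace ℝ (Fin d)) ∈ C) :
    minkowskiDiff K C ρ ⊆ K := fun t ht => by
  simpa using mem_minkowskiDiff.1 ht 0 h0

lemma isClosed_minkowskiDiff (hK : IsClosed K) : IsClosed (minkowskiDiff K C ρ) := by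
  have : minkowskiDiff K C ρ = ⋂ c ∈ C, (· + ρ • c) ⁻¹' K := by
    ext t; simp [mem_minkowskiDiff]
  rw [this]
  exact isClosed_biInter fun c _ => hK.preimage (continuous_add_const _)

lemma isCompact_minkowskiDiff (hK : IsCompact K) (hC : C.Nonempty) :
    IsCompact (minkowskiDiff K C ρ) := by
  obtain ⟨c, hc⟩ := hC
  refine ((Homeomorph.addRight (ρ • c)).isCompact_preimage.2 hK).of_isClosed_subset
    (isClosed_minkowskiDiff hK.isClosed) fun t ht => mem_minkowskiDiff.1 ht c hc

lemma convex_minkowskiDiff (hK : Convex ℝ K) : Convex ℝ (minkowskiDiff K C ρ) := by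
  intro t ht t' ht' a b ha hb hab
  refine mem_minkowskiDiff.2 fun c hc => ?_
  convert hK (mem_minkowskiDiff.1 ht c hc) (mem_minkowskiDiff.1 ht' c hc) ha hb hab using 1
  rw [smul_add, smul_add, add_add_add_comm, smul_smul, smul_smul, ← add_smul, ← add_mul, hab,
    one_mul]

lemma minkowskiDiff_anti (hC : Convex ℝ C) (h0 : (0 : EuclideanSpace ℝ (Fin d)) ∈ C)
    (hρ : 0 ≤ ρ) (h : ρ ≤ ρ') : minkowskiDiff K C ρ' ⊆ minkowskiDiff K C ρ := by
  intro t ht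
  refine mem_minkowskiDiff.2 fun c hc => ?_
  rcases hρ.eq_or_lt with rfl | hρpos
  · simpa using mem_minkowskiDiff.1 ht 0 h0
  have hρ' : 0 < ρ' := hρpos.trans_le h
  convert mem_minkowskiDiff.1 ht _ (hC.smul_mem_of_zero_mem h0 hc
    ⟨div_nonneg hρ hρ'.le, div_le_one_of_le₀ h hρ'.le⟩) using 2
  rw [smul_smul, mul_div_cancel₀ _ hρ'.ne']

lemma mem_minkowskiDiff_of_forall_lt (hK : IsClosed K) (hr : 0 < r)
    (h : ∀ ρ ∈ Ico 0 r, t ∈ minkowskiDiff K C ρ) : t ∈ minkowskiDiff K C r := by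
  refine mem_minkowskiDiff.2 fun c hc => ?_
  have hclosed : IsClosed {s : ℝ | t + s • c ∈ K} :=
    hK.preimage (continuous_const.add (continuous_id.smul continuous_const))
  refine hclosed.closure_subset_iff.2 (fun s hs => mem_minkowskiDiff.1 (h s hs) c hc) ?_
  rw [closure_Ico hr.ne]
  exact right_mem_Icc.2 hr.le

lemma eventually_minkowskiDiff_subset (hK : IsCompact K) (hC : Convex ℝ C)
    (h0 : (0 : EuclideanSpace ℝ (Fin d)) ∈ C) (hr : 0 < r) {U : Set (EuclideanSpace ℝ (Fin d))}
    (hU : IsOpen U) (hsub : minkowskiDiff K C r ⊆ U) :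
    ∀ᶠ ρ in 𝓝[<] r, minkowskiDiff K C ρ ⊆ U := by
  have : Nonempty (Ico 0 r) := ⟨⟨0, le_rfl, hr⟩⟩
  obtain ⟨⟨ρ₀, hρ₀⟩, hρ₀U⟩ := hK.elim_directed_family_closed
    (fun ρ : Ico 0 r => minkowskiDiff K C ρ \ U)
    (fun _ => (isClosed_minkowskiDiff hK.isClosed).sdiff hU)
    (by
      refine eq_empty_of_forall_notMem fun t ⟨_, ht⟩ => ?_
      simp only [mem_iInter, mem_sdiff] at ht
      obtain ⟨_, htU⟩ := ht ⟨0, le_rfl, hr⟩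
      exact htU (hsub (mem_minkowskiDiff_of_forall_lt hK.isClosed hr fun ρ hρ =>
        (ht ⟨ρ, hρ⟩).1)))
    (fun ρ₁ ρ₂ => ⟨⟨max ρ₁ ρ₂, le_max_of_le_left ρ₁.2.1, max_lt ρ₁.2.2 ρ₂.2.2⟩,
      sdiff_subset_sdiff_left (minkowskiDiff_anti hC h0 ρ₁.2.1 (le_max_left _ _)),
      sdiff_subset_sdiff_left (minkowskiDiff_anti hC h0 ρ₂.2.1 (le_max_right _ _))⟩)
  filter_upwards [Ioo_mem_nhdsLT hρ₀.2] with ρ hρ t ht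
  have ht₀ := minkowskiDiff_anti hC h0 hρ₀.1 hρ.1.le ht
  by_contra htU
  exact hρ₀U.subset ⟨minkowskiDiff_subset h0 ht₀, ht₀, htU⟩

lemma minkowskiDiff_vadd_right (c : EuclideanSpace ℝ (Fin d)) :
    minkowskiDiff K (c +ᵥ C) ρ = -(ρ • c) +ᵥ minkowskiDiff K C ρ := by
  ext t
  rw [mem_neg_vadd_set_iff, mem_minkowskiDiff, mem_minkowskiDiff, ← image_vadd, forall_mem_image]
  refine forall₂_congr fun x _ => ?_
  rw [vadd_eq_add, vadd_eq_add, smul_add, add_comm (ρ • c) t, add_assoc]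

lemma interior_minkowskiDiff_eq_empty (hC : Bornology.IsBounded C)
    (hr : IsGreatest {l | 0 ≤ l ∧ (minkowskiDiff K C l).Nonempty} r) :
    interior (minkowskiDiff K C r) = ∅ := by
  refine eq_empty_of_forall_notMem fun x hx => ?_
  obtain ⟨ε, hε, hball⟩ := Metric.isOpen_iff.1 isOpen_interior x hx
  obtain ⟨R, hR, hCR⟩ := hC.exists_pos_norm_le
  set δ := ε / (2 * R)
  have hδ : 0 < δ := by positivity
  have hshift : ∀ c ∈ C, x + δ • c ∈ minkowskiDiff K C r := fun c hc => by
    refine interior_subset (hball ?_)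
    rw [Metric.mem_ball, dist_eq_norm, add_sub_cancel_left, norm_smul, Real.norm_of_nonneg hδ.le]
    calc δ * ‖c‖ ≤ δ * R := by gcongr; exact hCR c hc
      _ < ε := by rw [div_mul_eq_mul_div, mul_div_assoc, div_mul_cancel_right₀ hR.ne']; linarith
  have hmem : r + δ ∈ {l | 0 ≤ l ∧ (minkowskiDiff K C l).Nonempty} :=
    ⟨by linarith [hr.1.1], x, mem_minkowskiDiff.2 fun c hc => by
      simpa [add_smul, add_assoc, add_comm (δ • c)] using mem_minkowskiDiff.1 (hshift c hc) c hc⟩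
  linarith [hr.2 hmem]

end minkowskiDiff

section roundedBody

variable {d : ℕ} {K C : Set (EuclideanSpace ℝ (Fin d))} {ρ ρ' r : ℝ}
  {t : EuclideanSpace ℝ (Fin d)}

lemma mem_roundedBody {x : EuclideanSpace ℝ (Fin d)} :
    x ∈ roundedBody K C ρ ↔ ∃ t ∈ minkowskiDiff K C ρ, ∃ c ∈ C, t + ρ • c = x := by
  simp [roundedBody, minkowskiDiff]

lemma roundedBody_eq_add : roundedBody K C ρ = minkowskiDiff K C ρ + ρ • C := by
  ext x
  simp only [roundedBody, mem_iUnion, exists_prop, mem_add, mem_smul_set]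
  constructor
  · rintro ⟨t, ht, c, hc, rfl⟩
    exact ⟨t, ht, _, ⟨c, hc, rfl⟩, rfl⟩
  · rintro ⟨t, ht, _, ⟨c, hc, rfl⟩, rfl⟩
    exact ⟨t, ht, c, hc, rfl⟩

lemma vadd_smul_subset_roundedBody (ht : t ∈ minkowskiDiff K C ρ) :
    t +ᵥ ρ • C ⊆ roundedBody K C ρ := by
  rintro _ ⟨_, ⟨c, hc, rfl⟩, rfl⟩
  rw [roundedBody_eq_add]
  exact add_mem_add ht (smul_mem_smul_set hc)

lemma isCompact_roundedBody (hK : IsCompact K) (hC : IsCompact C) :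
    IsCompact (roundedBody K C ρ) := by
  rcases C.eq_empty_or_nonempty with rfl | hCne
  · simp [roundedBody_eq_add]
  rw [roundedBody_eq_add]
  exact (isCompact_minkowskiDiff hK hCne).add (hC.smul ρ)

lemma roundedBody_anti (hC : Convex ℝ C) (hρ : 0 ≤ ρ) (h : ρ ≤ ρ') :
    roundedBody K C ρ' ⊆ roundedBody K C ρ := by
  intro x hx
  obtain ⟨t, ht, c, hc, rfl⟩ := mem_roundedBody.1 hx
  refine mem_roundedBody.2 ⟨t + (ρ' - ρ) • c, mem_minkowskiDiff.2 fun c' hc' => ?_, c, hc, by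
    rw [add_assoc, ← add_smul, sub_add_cancel]⟩
  have hmem : (ρ' - ρ) • c + ρ • c' ∈ ρ' • C := by
    rw [← sub_add_cancel ρ' ρ, hC.add_smul (sub_nonneg.2 h) hρ, sub_add_cancel]
    exact add_mem_add (smul_mem_smul_set hc) (smul_mem_smul_set hc')
  obtain ⟨c'', hc'', hc''eq⟩ := hmem
  rw [add_assoc, ← hc''eq]
  exact mem_minkowskiDiff.1 ht c'' hc''

lemma smul_add_smul_roundedBody_subset (hK : Convex ℝ K) (hC : Convex ℝ C) {ρ₁ ρ₂ a b : ℝ}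
    (hρ₁ : 0 ≤ ρ₁) (hρ₂ : 0 ≤ ρ₂) (ha : 0 ≤ a) (hb : 0 ≤ b) (hab : a + b = 1) :
    a • roundedBody K C ρ₁ + b • roundedBody K C ρ₂ ⊆ roundedBody K C (a * ρ₁ + b * ρ₂) := by
  rintro _ ⟨_, ⟨x₁, hx₁, rfl⟩, _, ⟨x₂, hx₂, rfl⟩, rfl⟩
  obtain ⟨t₁, ht₁, c₁, hc₁, rfl⟩ := mem_roundedBody.1 hx₁
  obtain ⟨t₂, ht₂, c₂, hc₂, rfl⟩ := mem_roundedBody.1 hx₂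
  have hmem : (a * ρ₁) • c₁ + (b * ρ₂) • c₂ ∈ (a * ρ₁ + b * ρ₂) • C := by
    rw [hC.add_smul (by positivity) (by positivity)]
    exact add_mem_add (smul_mem_smul_set hc₁) (smul_mem_smul_set hc₂)
  obtain ⟨c, hc, hceq⟩ := hmem
  refine mem_roundedBody.2 ⟨a • t₁ + b • t₂, mem_minkowskiDiff.2 fun c' hc' => ?_, c, hc, ?_⟩
  · convert hK (mem_minkowskiDiff.1 ht₁ c' hc') (mem_minkowskiDiff.1 ht₂ c' hc') ha hb hab
      using 1
    simp only [smul_add, smul_smul, add_smul]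
    abel
  · simp only [hceq, smul_add, smul_smul]
    abel

lemma roundedBody_nonempty (hC : Convex ℝ C) (hCne : C.Nonempty)
    (hne : (minkowskiDiff K C r).Nonempty) (hρ : ρ ∈ Icc 0 r) : (roundedBody K C ρ).Nonempty :=
  ((hCne.smul_set.vadd_set).mono (vadd_smul_subset_roundedBody hne.some_mem)).mono
    (roundedBody_anti hC hρ.1 hρ.2)

lemma roundedBody_vadd_right (c : EuclideanSpace ℝ (Fin d)) :
    roundedBody K (c +ᵥ C) ρ = roundedBody K C ρ := by
  ext x
  rw [mem_roundedBody, mem_roundedBody, minkowskiDiff_vadd_right]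
  constructor
  · rintro ⟨t, ht, _, ⟨c', hc', rfl⟩, rfl⟩
    exact ⟨_, mem_neg_vadd_set_iff.1 ht, c', hc', by
      simp only [vadd_eq_add, smul_add]; abel⟩
  · rintro ⟨t, ht, c', hc', rfl⟩
    refine ⟨-(ρ • c) + t, ?_, c + c', vadd_mem_vadd_set hc', by rw [smul_add]; abel⟩
    rwa [mem_neg_vadd_set_iff, vadd_eq_add, add_neg_cancel_left]

end roundedBody

section successiveInradius

variable {d : ℕ} {K C : Set (EuclideanSpace ℝ (Fin d))} {ρ r : ℝ}

lemma antitoneOn_relMinWidth_roundedBody (hK : IsCompact K) (hC : IsCompact C)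
    (hCconv : Convex ℝ C) : AntitoneOn (fun ρ => relMinWidth C (roundedBody K C ρ)) (Ici 0) :=
  fun _ hρ _ _ h => relMinWidth_mono (isCompact_roundedBody hK hC) (isCompact_roundedBody hK hC)
    hC (roundedBody_anti hCconv hρ h)

lemma concaveOn_relMinWidth_roundedBody (hK : IsCompact K) (hKconv : Convex ℝ K)
    (hC : IsCompact C) (hCconv : Convex ℝ C) (hCint : (interior C).Nonempty)
    (hne : (minkowskiDiff K C r).Nonempty) :
    ConcaveOn ℝ (Icc 0 r) (fun ρ => relMinWidth C (roundedBody K C ρ)) := by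
  have hCne : C.Nonempty := hCint.mono interior_subset
  refine ⟨convex_Icc 0 r, fun ρ₁ hρ₁ ρ₂ hρ₂ a b ha hb hab => ?_⟩
  exact mul_relMinWidth_add_mul_le (isCompact_roundedBody hK hC)
    (roundedBody_nonempty hCconv hCne hne hρ₁) (isCompact_roundedBody hK hC)
    (roundedBody_nonempty hCconv hCne hne hρ₂) (isCompact_roundedBody hK hC) hC hCint ha hb
    (smul_add_smul_roundedBody_subset hKconv hCconv hρ₁.1 hρ₂.1 ha hb hab)

lemma le_relMinWidth_roundedBody [Nonempty {v : EuclideanSpace ℝ (Fin d) // ‖v‖ = 1}]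
    (hK : IsCompact K) (hC : IsCompact C) (hCconv : Convex ℝ C) (hCint : (interior C).Nonempty)
    {t : EuclideanSpace ℝ (Fin d)} (ht : t ∈ minkowskiDiff K C r) (hρ : ρ ∈ Icc 0 r) :
    r ≤ relMinWidth C (roundedBody K C ρ) :=
  calc r = relMinWidth C (t +ᵥ r • C) :=
        (relMinWidth_vadd_smul_self hC hCint t (hρ.1.trans hρ.2)).symm
    _ ≤ _ := relMinWidth_mono ((hC.smul r).vadd t) (isCompact_roundedBody hK hC) hC
        ((vadd_smul_subset_roundedBody ht).trans (roundedBody_anti hCconv hρ.1 hρ.2))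

lemma relMinWidth_roundedBody_le (hK : IsCompact K) (hC : IsCompact C)
    (hCint : (interior C).Nonempty) (hρ : 0 ≤ ρ) (hne : (minkowskiDiff K C ρ).Nonempty)
    (u : {v : EuclideanSpace ℝ (Fin d) // ‖v‖ = 1}) :
    relMinWidth C (roundedBody K C ρ) ≤ ρ + dirWidth (minkowskiDiff K C ρ) u / dirWidth C u := by
  have hCne : C.Nonempty := hCint.mono interior_subset
  have hCu := dirWidth_pos hC hCint u.2
  calc relMinWidth C (roundedBody K C ρ)
      ≤ dirWidth (roundedBody K C ρ) u / dirWidth C u :=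
        relMinWidth_le (isCompact_roundedBody hK hC) hC u
    _ = ρ + dirWidth (minkowskiDiff K C ρ) u / dirWidth C u := by
        rw [roundedBody_eq_add, dirWidth_add (isCompact_minkowskiDiff hK hCne) hne (hC.smul ρ)
          hCne.smul_set, dirWidth_smul hC hρ]
        field_simp
        ring

/-- As `ρ → r⁻`, `K ⊖ ρC` shrinks into thin slabs around the hyperplane `⟪x, u⟫ = α`, so its
width in direction `u` tends to `0`. -/
lemma eventually_relMinWidth_roundedBody_le (hK : IsCompact K) (hC : IsCompact C)
    (hCconv : Convex ℝ C) (h0 : (0 : EuclideanSpace ℝ (Fin d)) ∈ interior C) (hr : 0 < r)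
    (hne : (minkowskiDiff K C r).Nonempty) {u : EuclideanSpace ℝ (Fin d)} (hu : ‖u‖ = 1)
    {α : ℝ} (hα : minkowskiDiff K C r ⊆ {x | ⟪x, u⟫ = α}) {s : ℝ} (hs : 0 < s) :
    ∀ᶠ ρ in 𝓝[<] r, relMinWidth C (roundedBody K C ρ) ≤ ρ + s := by
  have hCu := dirWidth_pos hC ⟨0, h0⟩ hu
  have hslab : IsOpen {x | |⟪x, u⟫ - α| < s * dirWidth C u / 2} :=
    isOpen_lt ((continuous_id.inner continuous_const).sub continuous_const).abs continuous_const
  filter_upwards [eventually_minkowskiDiff_subset hK hCconv (interior_subset h0) hr hslab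
    (fun x hx => by
      rw [mem_ofPred_eq, show ⟪x, u⟫ = α from hα hx, sub_self, abs_zero]; positivity),
    Ioo_mem_nhdsLT hr] with ρ hρU hρ
  have hTne := hne.mono (minkowskiDiff_anti hCconv (interior_subset h0) hρ.1.le hρ.2.le)
  have hw : dirWidth (minkowskiDiff K C ρ) u ≤ s * dirWidth C u :=
    dirWidth_le (isCompact_minkowskiDiff hK ⟨0, interior_subset h0⟩) hTne fun x hx y hy => by
      have hx' : |⟪x, u⟫ - α| < s * dirWidth C u / 2 := hρU hx
      have hy' : |⟪y, u⟫ - α| < s * dirWidth C u / 2 := hρU hy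
      linarith [abs_lt.1 hx', abs_lt.1 hy']
  calc relMinWidth C (roundedBody K C ρ)
      ≤ ρ + dirWidth (minkowskiDiff K C ρ) u / dirWidth C u :=
        relMinWidth_roundedBody_le hK hC ⟨0, h0⟩ hρ.1.le hTne ⟨u, hu⟩
    _ ≤ ρ + s := by gcongr; exact (div_le_iff₀ hCu).2 hw

theorem existsUnique_relMinWidth_roundedBody_eq_of_zero_mem_interior {n : ℕ} (hn : 1 ≤ n)
    (hK : IsCompact K) (hKconv : Convex ℝ K) (hC : IsCompact C) (hCconv : Convex ℝ C)
    (h0 : (0 : EuclideanSpace ℝ (Fin d)) ∈ interior C) (hr : 0 < r)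
    (hrmax : IsGreatest {l | 0 ≤ l ∧ (minkowskiDiff K C l).Nonempty} r) :
    ∃! ρ, (0 < ρ ∧ ρ ≤ r) ∧ relMinWidth C (roundedBody K C ρ) = n * ρ := by
  obtain ⟨t, ht⟩ := hrmax.1.2
  obtain ⟨u, hu, α, hα⟩ :=
    (convex_minkowskiDiff hKconv).exists_subset_hyperplane_of_interior_eq_empty
      (interior_minkowskiDiff_eq_empty hC.isBounded hrmax) ⟨t, ht⟩
  have : Nonempty {v : EuclideanSpace ℝ (Fin d) // ‖v‖ = 1} := ⟨⟨u, hu⟩⟩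
  exact existsUnique_eq_nat_mul_of_concaveOn hn hr
    (concaveOn_relMinWidth_roundedBody hK hKconv hC hCconv ⟨0, h0⟩ ⟨t, ht⟩)
    ((antitoneOn_relMinWidth_roundedBody hK hC hCconv).mono Icc_subset_Ici_self)
    (fun _ => le_relMinWidth_roundedBody hK hC hCconv ⟨0, h0⟩ ht)
    (fun _ hs => eventually_relMinWidth_roundedBody_le hK hC hCconv h0 hr ⟨t, ht⟩ hu hα hs)

end successiveInradius

theorem successive_inradius_exists_unique_general {d n : ℕ} (hn : 1 ≤ n)
    (K C : Set (EuclideanSpace ℝ (Fin d)))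
    (hK : IsCompact K) (hKconv : Convex ℝ K)
    (hC : IsCompact C) (hCconv : Convex ℝ C) (hCint : (interior C).Nonempty)
    (r : ℝ) (hr : 0 < r)
    (hrmax : IsGreatest
      {l : ℝ | 0 ≤ l ∧ ∃ t : EuclideanSpace ℝ (Fin d), (fun x => t + l • x) '' C ⊆ K} r) :
    ∃! ρ : ℝ, (0 < ρ ∧ ρ ≤ r) ∧ relMinWidth C (roundedBody K C ρ) = n * ρ := by
  obtain ⟨c, hc⟩ := hCint
  have h0 : (0 : EuclideanSpace ℝ (Fin d)) ∈ interior (-c +ᵥ C) := by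
    rw [interior_vadd]
    exact ⟨c, hc, neg_add_cancel c⟩
  have hrmax' : IsGreatest {l | 0 ≤ l ∧ (minkowskiDiff K (-c +ᵥ C) l).Nonempty} r := by
    simp only [minkowskiDiff_vadd_right, vadd_set_nonempty]
    exact hrmax
  simpa only [roundedBody_vadd_right, relMinWidth_vadd_left hC ⟨c, interior_subset hc⟩] using
    existsUnique_relMinWidth_roundedBody_eq_of_zero_mem_interior hn hK hKconv (hC.vadd (-c))
      (hCconv.vadd (-c)) h0 hr hrmax'

/-- **Existence and uniqueness of the `n`-th successive `C`-inradius.** Let `K`, `C` be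
convex bodies in `ℝ^d`, let `r > 0` be the `C`-inradius of `K`, and let `n ≥ 1`. Then
there is a unique `ρ ∈ (0, r]` with `w_C(K^{ρC}) = n·ρ`. -/
theorem successive_inradius_exists_unique {d n : ℕ} (hn : 1 ≤ n)
    (K C : Set (EuclideanSpace ℝ (Fin d)))
    (hK : IsCompact K) (hKconv : Convex ℝ K) (hKint : (interior K).Nonempty)
    (hC : IsCompact C) (hCconv : Convex ℝ C) (hCint : (interior C).Nonempty)
    (r : ℝ) (hr : 0 < r)
    (hrmax : IsGreatest
      {l : ℝ | 0 ≤ l ∧ ∃ t : EuclideanSpace ℝ (Fin d), (fun x => t + l • x) '' C ⊆ K} r) :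
    ∃! ρ : ℝ, (0 < ρ ∧ ρ ≤ r) ∧ relMinWidth C (roundedBody K C ρ) = n * ρ :=
  successive_inradius_exists_unique_general hn K C hK hKconv hC hCconv hCint r hr hrmax
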